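/- Let 2 ≤ k ≤ n, let 0 < δ ≤ 1/2, and let λ ∈ Γ_k ⊂ ℝ^n with λ_1 = max_i λ_i. Suppose p ≠ 1 is an index such that λ_p ≥ −δ·λ_1 and σ_{k−1}(λ|p) ≥ δ^{−1}·σ_{k−1}(λ|1). Then λ_1 · σ_{k−2}(λ|1p) ≥ (1−2δ) · σ_{k−1}(λ|p). -/

import Mathlib

open Finset

/-- The `m`-th elementary symmetric polynomial of `lam : Fin n → ℝ`. -/
noncomputable def esymmS (n m : ℕ) (lam : Fin n → ℝ) : ℝ :=
  ∑ s ∈ Finset.univ.powersetCard m, ∏ i ∈ s, lam i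

/-- The Gårding cone `Γ_m ⊆ ℝ^n`. -/
def GammaCone (n m : ℕ) (lam : Fin n → ℝ) : Prop :=
  ∀ j : ℕ, 1 ≤ j → j ≤ m → 0 < esymmS n j lam

/-- `σ_m(λ|i)`: the `m`-th elementary symmetric polynomial of `λ` with the `i`-th entry deleted. -/
noncomputable def esymmDel (n m : ℕ) (lam : Fin n → ℝ) (i : Fin n) : ℝ :=
  ∑ s ∈ (Finset.univ.erase i).powersetCard m, ∏ l ∈ s, lam l

/-- `σ_m(λ|ij)`: the `m`-th elementary symmetric polynomial of `λ` with the `i`-th and `j`-th entries deleted. -/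
noncomputable def esymmDel2 (n m : ℕ) (lam : Fin n → ℝ) (i j : Fin n) : ℝ :=
  ∑ s ∈ ((Finset.univ.erase i).erase j).powersetCard m, ∏ l ∈ s, lam l

/-!
Write `A = σ_{k-1}(λ|1p)`, `B = σ_{k-2}(λ|1p)` and `X = σ_{k-1}(λ|p) = A + λ_1 B`. Since
`σ_{k-1}(λ|1) = A + λ_p B`, the hypotheses give `A ≤ δ X - λ_p B ≤ δ X + δ λ_1 B`, and the claim is
`A ≤ 2 δ X`. This is immediate once `X > 0` and `B > 0`, i.e. once deleting an entry maps `Γ_{k+1}`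
into `Γ_k`.

That cone property is proved by induction on `k`. If `λ ∈ Γ_{k+1}` but `σ_k(λ|i) ≤ 0`, add a
constant `s ≥ 0` to every entry (this preserves `Γ_{k+1}`) so that `μ = λ + s` has `σ_k(μ|i) = 0`.
Then `σ_{k+1}(μ|i) = σ_{k+1}(μ) > 0`, while for `ν = μ|i` summing
`σ_{k+1}(ν) = σ_{k+1}(ν|j) - ν_j² σ_{k-1}(ν|j)` over `j` gives
`(k+1) σ_{k+1}(ν) = -∑ ν_j² σ_{k-1}(ν|j) ≤ 0`, the `σ_{k-1}(ν|j)` being nonnegative by induction,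
applied to `ν + ε` and letting `ε → 0`.
-/

open Polynomial

section ElementarySymmetric

variable {α : Type*}

noncomputable def esymmOn (lam : α → ℝ) (A : Finset α) (m : ℕ) : ℝ :=
  ∑ s ∈ A.powersetCard m, ∏ i ∈ s, lam i

@[simp]
lemma esymmOn_zero (lam : α → ℝ) (A : Finset α) : esymmOn lam A 0 = 1 := by
  simp [esymmOn]

lemma esymmOn_eq_zero_of_card_lt (lam : α → ℝ) {A : Finset α} {m : ℕ} (h : #A < m) :
    esymmOn lam A m = 0 := by
  simp [esymmOn, powersetCard_eq_empty.2 h]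

lemma le_card_of_esymmOn_ne_zero {lam : α → ℝ} {A : Finset α} {m : ℕ}
    (h : esymmOn lam A m ≠ 0) : m ≤ #A :=
  not_lt.1 fun hlt => h (esymmOn_eq_zero_of_card_lt lam hlt)

lemma esymmOn_eq_coeff (lam : α → ℝ) {A : Finset α} {m : ℕ} (hm : m ≤ #A) :
    esymmOn lam A m = (∏ i ∈ A, (X + C (lam i))).coeff (#A - m) := by
  rw [Finset.prod_X_add_C_coeff A lam (Nat.sub_le _ _), Nat.sub_sub_self hm]
  rfl

lemma prod_X_add_C_eq_sum_esymmOn (lam : α → ℝ) (A : Finset α) :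
    ∏ i ∈ A, (X + C (lam i)) = ∑ j ∈ range (#A + 1), C (esymmOn lam A j) * X ^ (#A - j) := by
  have h := Multiset.prod_X_add_C_eq_sum_esymm (A.val.map lam)
  rw [Multiset.map_map, Multiset.card_map] at h
  simp only [Finset.esymm_map_val] at h
  exact h

lemma esymmOn_add_const (lam : α → ℝ) {A : Finset α} {m : ℕ} (hm : m ≤ #A) (c : ℝ) :
    esymmOn (fun x => lam x + c) A m = ∑ j ∈ range (#A + 1),
      esymmOn lam A j * (c ^ (#A - j - (#A - m)) * (#A - j).choose (#A - m)) := by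
  have hcomp : ∏ i ∈ A, (X + C (lam i + c)) = (∏ i ∈ A, (X + C (lam i))).comp (X + C c) := by
    rw [Polynomial.prod_comp]
    refine prod_congr rfl fun i _ => ?_
    simp only [add_comp, X_comp, C_comp, C_add]
    ring
  rw [esymmOn_eq_coeff _ hm, hcomp, prod_X_add_C_eq_sum_esymmOn, Polynomial.sum_comp,
    finsetSum_coeff]
  refine sum_congr rfl fun j _ => ?_
  simp only [mul_comp, C_comp, pow_comp, X_comp, coeff_C_mul, coeff_X_add_C_pow]

lemma pow_add_esymmOn_le_esymmOn_add_const (lam : α → ℝ) {A : Finset α} {m : ℕ} (hm0 : m ≠ 0)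
    (hm : m ≤ #A) (h : ∀ j < m, 0 ≤ esymmOn lam A j) {c : ℝ} (hc : 0 ≤ c) :
    c ^ m + esymmOn lam A m ≤ esymmOn (fun x => lam x + c) A m := by
  set f : ℕ → ℝ := fun j =>
    esymmOn lam A j * (c ^ (#A - j - (#A - m)) * (#A - j).choose (#A - m))
  have hfm : f m = esymmOn lam A m := by simp [f]
  have hf0 : c ^ m ≤ f 0 := by
    simp only [f, esymmOn_zero, one_mul, Nat.sub_zero, Nat.sub_sub_self hm]
    exact le_mul_of_one_le_right (by positivity)
      (by exact_mod_cast Nat.choose_pos (Nat.sub_le _ _))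
  have hf : ∀ j ∈ (range (#A + 1)).erase m, 0 ≤ f j := by
    intro j hj
    obtain ⟨hjm, hj⟩ := mem_erase.1 hj
    rcases lt_or_gt_of_ne hjm with hlt | hgt
    · exact mul_nonneg (h j hlt) (by positivity)
    · simp [f, Nat.choose_eq_zero_of_lt (by grind : #A - j < #A - m)]
  rw [esymmOn_add_const lam hm c, ← add_sum_erase _ f (mem_range.2 (by omega : m < #A + 1)),
    hfm, add_comm]
  gcongr
  exact hf0.trans (single_le_sum hf (mem_erase.2 ⟨Ne.symm hm0, by simp⟩))

lemma continuous_esymmOn_add_const (lam : α → ℝ) (A : Finset α) (m : ℕ) :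
    Continuous fun c : ℝ => esymmOn (fun x => lam x + c) A m := by
  unfold esymmOn
  fun_prop

lemma esymmOn_nonneg_of_forall_add_const_pos {lam : α → ℝ} {A : Finset α} {m : ℕ}
    (h : ∀ ε > 0, 0 < esymmOn (fun x => lam x + ε) A m) : 0 ≤ esymmOn lam A m := by
  have hlim := (continuous_esymmOn_add_const lam A m).tendsto 0
  simp only [add_zero] at hlim
  exact ge_of_tendsto (hlim.mono_left (nhdsWithin_le_nhds (s := Set.Ioi 0)))
    (eventually_nhdsWithin_of_forall fun ε hε => (h ε hε).le)

lemma exists_nonneg_esymmOn_add_const_eq_zero {lam : α → ℝ} {A : Finset α} {m : ℕ} (hm0 : m ≠ 0)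
    (hm : m ≤ #A) (h : ∀ j < m, 0 ≤ esymmOn lam A j) (hneg : esymmOn lam A m ≤ 0) :
    ∃ s, 0 ≤ s ∧ esymmOn (fun x => lam x + s) A m = 0 := by
  set S := 1 - esymmOn lam A m
  have hS1 : 1 ≤ S := by linarith
  have hfS : 0 ≤ esymmOn (fun x => lam x + S) A m := by
    linarith [pow_add_esymmOn_le_esymmOn_add_const lam hm0 hm h (by linarith : 0 ≤ S),
      le_self_pow₀ hS1 hm0]
  obtain ⟨s, ⟨hs0, -⟩, hs⟩ := intermediate_value_Icc (by linarith : (0 : ℝ) ≤ S)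
    (continuous_esymmOn_add_const lam A m).continuousOn ⟨by simpa using hneg, hfS⟩
  exact ⟨s, hs0, hs⟩

def GardingOn (lam : α → ℝ) (A : Finset α) (k : ℕ) : Prop :=
  ∀ j, 1 ≤ j → j ≤ k → 0 < esymmOn lam A j

namespace GardingOn

variable {lam : α → ℝ} {A : Finset α} {k : ℕ}

lemma mono (h : GardingOn lam A k) {j : ℕ} (hjk : j ≤ k) : GardingOn lam A j :=
  fun i hi1 hij => h i hi1 (hij.trans hjk)

lemma esymmOn_pos (h : GardingOn lam A k) {j : ℕ} (hjk : j ≤ k) : 0 < esymmOn lam A j := by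
  rcases Nat.eq_zero_or_pos j with rfl | hj
  · simp
  · exact h j hj hjk

lemma le_card (h : GardingOn lam A k) : k ≤ #A := by
  rcases Nat.eq_zero_or_pos k with rfl | hk
  · exact Nat.zero_le _
  · exact le_card_of_esymmOn_ne_zero (h k hk le_rfl).ne'

lemma add_const (h : GardingOn lam A k) {c : ℝ} (hc : 0 ≤ c) :
    GardingOn (fun x => lam x + c) A k := fun j hj1 hjk =>
  calc 0 < c ^ j + esymmOn lam A j := by positivity [h j hj1 hjk]
    _ ≤ _ := pow_add_esymmOn_le_esymmOn_add_const lam (by omega) ((h.mono hjk).le_card)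
      (fun i hi => (h.esymmOn_pos (by omega)).le) hc

end GardingOn

lemma gardingOn_add_const_of_nonneg {lam : α → ℝ} {A : Finset α} {k : ℕ} (hk : k ≤ #A)
    (h : ∀ j ≤ k, 0 ≤ esymmOn lam A j) {c : ℝ} (hc : 0 < c) :
    GardingOn (fun x => lam x + c) A k := fun j hj1 hjk =>
  calc 0 < c ^ j + esymmOn lam A j := by positivity [h j hjk]
    _ ≤ _ := pow_add_esymmOn_le_esymmOn_add_const lam (by omega) (hjk.trans hk)
      (fun i hi => h i (by omega)) hc.le

variable [DecidableEq α]

lemma esymmOn_succ_of_mem (lam : α → ℝ) {A : Finset α} {i : α} (hi : i ∈ A) (m : ℕ) :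
    esymmOn lam A (m + 1) =
      esymmOn lam (A.erase i) (m + 1) + lam i * esymmOn lam (A.erase i) m := by
  have hi' : i ∉ A.erase i := notMem_erase i A
  have hnot : ∀ s ∈ (A.erase i).powersetCard m, i ∉ s := fun s hs h =>
    hi' ((mem_powersetCard.1 hs).1 h)
  unfold esymmOn
  conv_lhs => rw [← insert_erase hi, powersetCard_succ_insert hi']
  rw [sum_union, sum_image, mul_sum]
  · exact congrArg _ (sum_congr rfl fun s hs => prod_insert (hnot s hs))
  · intro s hs t ht hst
    simpa [erase_insert (hnot s hs), erase_insert (hnot t ht)] using congrArg (·.erase i) hst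
  · refine disjoint_right.2 fun s hs hs' => ?_
    obtain ⟨t, -, rfl⟩ := mem_image.1 hs
    exact hi' ((mem_powersetCard.1 hs').1 (mem_insert_self i t))

lemma sum_esymmOn_erase (lam : α → ℝ) (A : Finset α) (m : ℕ) :
    ∑ j ∈ A, esymmOn lam (A.erase j) m = ((#A - m : ℕ) : ℝ) * esymmOn lam A m := by
  unfold esymmOn
  rw [sum_comm' (t' := A.powersetCard m) (s' := fun s => A \ s), mul_sum]
  · refine sum_congr rfl fun s hs => ?_
    obtain ⟨hsA, hcard⟩ := mem_powersetCard.1 hs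
    rw [sum_const, card_sdiff_of_subset hsA, hcard, nsmul_eq_mul]
  · intro j s
    simp only [mem_powersetCard, mem_sdiff, subset_erase]
    tauto

lemma esymmOn_add_two_nonpos {lam : α → ℝ} {A : Finset α} {m : ℕ}
    (h0 : esymmOn lam A (m + 1) = 0) (hnn : ∀ j ∈ A, 0 ≤ esymmOn lam (A.erase j) m) :
    esymmOn lam A (m + 2) ≤ 0 := by
  rcases lt_or_ge #A (m + 2) with hlt | hle
  · exact (esymmOn_eq_zero_of_card_lt lam hlt).le
  have hdel : ∀ j ∈ A, esymmOn lam A (m + 2) =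
      esymmOn lam (A.erase j) (m + 2) - lam j ^ 2 * esymmOn lam (A.erase j) m := by
    intro j hj
    have h1 := esymmOn_succ_of_mem lam hj (m + 1)
    have h2 := esymmOn_succ_of_mem lam hj m
    rw [h0] at h2
    linear_combination h1 - lam j * h2
  have hsum : (#A : ℝ) * esymmOn lam A (m + 2) =
      ((#A : ℝ) - (m + 2)) * esymmOn lam A (m + 2) -
        ∑ j ∈ A, lam j ^ 2 * esymmOn lam (A.erase j) m := by
    calc (#A : ℝ) * esymmOn lam A (m + 2) = ∑ j ∈ A, esymmOn lam A (m + 2) := by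
          rw [sum_const, nsmul_eq_mul]
      _ = _ := by
        rw [sum_congr rfl hdel, sum_sub_distrib, sum_esymmOn_erase, Nat.cast_sub hle]
        push_cast
        ring
  have hsq : 0 ≤ ∑ j ∈ A, lam j ^ 2 * esymmOn lam (A.erase j) m :=
    sum_nonneg fun j hj => mul_nonneg (sq_nonneg _) (hnn j hj)
  nlinarith

theorem GardingOn.erase {lam : α → ℝ} {A : Finset α} {i : α} {k : ℕ}
    (h : GardingOn lam A (k + 1)) (hi : i ∈ A) : GardingOn lam (A.erase i) k := by
  induction k generalizing lam A i with
  | zero => intro j hj1 hj0; omega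
  | succ k ih =>
    have hB : GardingOn lam (A.erase i) k := ih (h.mono (by omega)) hi
    intro j hj1 hjk
    rcases Nat.lt_or_ge j (k + 1) with hjlt | hjge
    · exact hB j hj1 (by omega)
    obtain rfl : j = k + 1 := by omega
    by_contra! hneg
    have hcard : k + 1 ≤ #(A.erase i) := by
      have := h.le_card
      rw [card_erase_of_mem hi]
      omega
    obtain ⟨s, hs, hzero⟩ := exists_nonneg_esymmOn_add_const_eq_zero k.succ_ne_zero hcard
      (fun j hj => (hB.esymmOn_pos (by omega)).le) hneg
    set μ := fun x => lam x + s
    have hμ : GardingOn μ A (k + 2) := h.add_const hs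
    have hμB : GardingOn μ (A.erase i) k := ih (hμ.mono (by omega)) hi
    have hpos : 0 < esymmOn μ (A.erase i) (k + 2) := by
      have hsplit := esymmOn_succ_of_mem μ hi (k + 1)
      rw [hzero, mul_zero, add_zero] at hsplit
      exact hsplit ▸ hμ _ (by omega) le_rfl
    refine (esymmOn_add_two_nonpos hzero fun j hj => ?_).not_gt hpos
    refine esymmOn_nonneg_of_forall_add_const_pos fun ε hε => ?_
    have hμε : GardingOn (fun x => μ x + ε) (A.erase i) (k + 1) :=
      gardingOn_add_const_of_nonneg hcard (fun j hj => by
        rcases Nat.lt_or_ge j (k + 1) with hjlt | hjge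
        · exact (hμB.esymmOn_pos (by omega)).le
        · rw [show j = k + 1 by omega, hzero]) hε
    exact (ih hμε hj).esymmOn_pos le_rfl

end ElementarySymmetric

theorem hmw_concavity_bound_general (n k : ℕ) (hk : 2 ≤ k)
    (δ : ℝ) (hδ0 : 0 < δ)
    (lam : Fin n → ℝ) (hlam : GammaCone n k lam)
    (i1 p : Fin n) (hp : p ≠ i1)
    (hlp : -δ * lam i1 ≤ lam p)
    (hsig : δ⁻¹ * esymmDel n (k - 1) lam i1 ≤ esymmDel n (k - 1) lam p) :
    (1 - 2 * δ) * esymmDel n (k - 1) lam p ≤ lam i1 * esymmDel2 n (k - 2) lam i1 p := by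
  obtain ⟨k, rfl⟩ : ∃ k', k = k' + 2 := ⟨k - 2, by omega⟩
  simp only [Nat.add_sub_cancel, show k + 2 - 1 = k + 1 by omega] at hsig ⊢
  set A := esymmDel2 n (k + 1) lam i1 p
  set B := esymmDel2 n k lam i1 p
  set X := esymmDel n (k + 1) lam p
  have hΓ : GardingOn lam univ (k + 2) := hlam
  have hp1 : p ∈ univ.erase i1 := mem_erase.2 ⟨hp, mem_univ p⟩
  have h1p : i1 ∈ univ.erase p := mem_erase.2 ⟨hp.symm, mem_univ i1⟩
  have hX : 0 < X := (hΓ.erase (mem_univ p)).esymmOn_pos le_rfl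
  have hB : 0 < B := ((hΓ.erase (mem_univ i1)).erase hp1).esymmOn_pos le_rfl
  have hdel1 : esymmDel n (k + 1) lam i1 = A + lam p * B := esymmOn_succ_of_mem lam hp1 k
  have hdelp : X = A + lam i1 * B := by
    rw [show A = esymmOn lam ((univ.erase p).erase i1) (k + 1) by rw [erase_right_comm]; rfl,
      show B = esymmOn lam ((univ.erase p).erase i1) k by rw [erase_right_comm]; rfl]
    exact esymmOn_succ_of_mem lam h1p k
  have hY : A + lam p * B ≤ δ * X := by
    rwa [inv_mul_le_iff₀ hδ0, hdel1] at hsig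
  suffices hA : A ≤ 2 * δ * X by linarith
  rcases lt_or_ge A 0 with hA | hA
  · linarith [mul_pos hδ0 hX]
  · have hlpB : -lam p * B ≤ δ * (lam i1 * B) := by
      linarith [mul_le_mul_of_nonneg_right hlp hB.le]
    have hXB : δ * (lam i1 * B) ≤ δ * X := mul_le_mul_of_nonneg_left (by linarith) hδ0.le
    linarith

/-- The concavity bound `λ_1 · σ_{k−2}(λ|1p) ≥ (1−2δ) · σ_{k−1}(λ|p)` of Hou–Ma–Wu. -/
theorem hmw_concavity_bound (n k : ℕ) (hk : 2 ≤ k) (hkn : k ≤ n)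
    (δ : ℝ) (hδ0 : 0 < δ) (hδ : δ ≤ 1 / 2)
    (lam : Fin n → ℝ) (hlam : GammaCone n k lam)
    (i1 p : Fin n) (hmax : ∀ i, lam i ≤ lam i1) (hp : p ≠ i1)
    (hlp : -δ * lam i1 ≤ lam p)
    (hsig : δ⁻¹ * esymmDel n (k - 1) lam i1 ≤ esymmDel n (k - 1) lam p) :
    (1 - 2 * δ) * esymmDel n (k - 1) lam p ≤ lam i1 * esymmDel2 n (k - 2) lam i1 p :=
  hmw_concavity_bound_general n k hk δ hδ0 lam hlam i1 p hp hlp hsig
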